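/- Consequently, for the block-diagonal semigroup T(t) on the Hilbert space H = ⊕_{n≥2} ℂ² defined by T(t)|_{H_n} = T_n(t), one has ‖T(t) A^{-1}‖ / ‖T(t)‖ ≍ 1/t → 0 as t → ∞, even though i·1 ∈ σ(A) ∩ iℝ may be nonempty for related examples; formally: (sup_n ‖T_n(t)A_n^{-1}‖)/(sup_n ‖T_n(t)‖) ≤ C'/t for t ≥ t₀. -/

import Mathlib

open Complex

noncomputable def battyA (n : ℕ) : Matrix (Fin 2) (Fin 2) ℂ :=
  !![(n : ℂ) * I + I / n, 1; 0, (n : ℂ) * I - I / n]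

noncomputable def opNorm2 (M : Matrix (Fin 2) (Fin 2) ℂ) : ℝ :=
  ‖Matrix.toEuclideanCLM (𝕜 := ℂ) M‖

/-!
`A_n` is upper triangular with the purely imaginary eigenvalues `i(n ± 1/n)`, so
`T_n(t) = e^{tA_n}` has unimodular diagonal entries and off-diagonal entry of modulus
`|e^{-2it/n} - 1| / (2/n) = n |sin (t/n)|`. That entry is at most `n`, and multiplying by `A_n⁻¹`
divides it by `n - 1/n`, so `‖T_n(t) A_n⁻¹‖ ≤ 3` uniformly in `n` and `t`. On the other hand, in
the block `n = ⌈t⌉ + 1` Jordan's inequality gives `n |sin (t/n)| ≥ 2t/π`, so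
`sup_n ‖T_n(t)‖ ≥ 2t/π`.
-/

open NormedSpace
open scoped Real

namespace Matrix

section Norm

variable {𝕜 ι : Type*} [RCLike 𝕜] [Fintype ι] [DecidableEq ι]

theorem norm_apply_le_norm_toEuclideanCLM (M : Matrix ι ι 𝕜) (i j : ι) :
    ‖M i j‖ ≤ ‖toEuclideanCLM (𝕜 := 𝕜) M‖ :=
  calc ‖M i j‖ = ‖toEuclideanCLM (𝕜 := 𝕜) M (EuclideanSpace.single j 1) i‖ := by simp
    _ ≤ ‖toEuclideanCLM (𝕜 := 𝕜) M (EuclideanSpace.single j 1)‖ := PiLp.norm_apply_le _ _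
    _ ≤ ‖toEuclideanCLM (𝕜 := 𝕜) M‖ := by
        simpa using (toEuclideanCLM (𝕜 := 𝕜) M).le_opNorm (EuclideanSpace.single j 1)

theorem norm_toEuclideanCLM_single_le (i j : ι) (c : 𝕜) :
    ‖toEuclideanCLM (𝕜 := 𝕜) (single i j c)‖ ≤ ‖c‖ := by
  refine ContinuousLinearMap.opNorm_le_bound _ (norm_nonneg c) fun x => ?_
  have hx : toEuclideanCLM (𝕜 := 𝕜) (single i j c) x = EuclideanSpace.single i (c * x j) := by
    ext k
    simp [single_mulVec_eq, Pi.single_apply]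
  rw [hx, PiLp.norm_single, norm_mul]
  exact mul_le_mul_of_nonneg_left (PiLp.norm_apply_le x j) (norm_nonneg c)

theorem norm_toEuclideanCLM_le_sum (M : Matrix ι ι 𝕜) :
    ‖toEuclideanCLM (𝕜 := 𝕜) M‖ ≤ ∑ i, ∑ j, ‖M i j‖ := by
  conv_lhs => rw [matrix_eq_sum_single M]
  simp only [map_sum]
  refine (norm_sum_le _ _).trans <| Finset.sum_le_sum fun i _ => ?_
  exact (norm_sum_le _ _).trans <| Finset.sum_le_sum fun j _ => norm_toEuclideanCLM_single_le i j _

end Norm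

theorem exp_upperTriangular_fin_two {𝔸 : Type*} [NormedCommRing 𝔸] [NormedAlgebra ℚ 𝔸]
    [CompleteSpace 𝔸] (x y p : 𝔸) :
    exp !![x, p * (y - x); 0, y] = !![exp x, p * (exp y - exp x); 0, exp y] := by
  have hconj (u v : 𝔸) :
      !![1, p; 0, 1] * diagonal ![u, v] * !![1, -p; 0, 1] = !![u, p * (v - u); 0, v] := by
    rw [diagonal_vec2, mul_fin_two, mul_fin_two]
    simp only [mul_one, mul_zero, one_mul, zero_mul, add_zero, zero_add, mul_neg]
    ring_nf
  let U : (Matrix (Fin 2) (Fin 2) 𝔸)ˣ :=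
    ⟨!![1, p; 0, 1], !![1, -p; 0, 1], by simp [one_fin_two], by simp [one_fin_two]⟩
  have h := exp_units_conj U (diagonal ![x, y])
  simp only [U, Units.inv_mk, exp_diagonal, Pi.exp_def, hconj] at h
  rw [h, ← hconj]
  congr
  ext i; fin_cases i <;> rfl

theorem inv_upperTriangular_fin_two {K : Type*} [Field K] {a d : K} (ha : a ≠ 0) (hd : d ≠ 0)
    (b : K) : (!![a, b; 0, d])⁻¹ = !![a⁻¹, -b / (a * d); 0, d⁻¹] := by
  refine inv_eq_right_inv ?_
  ext i j
  fin_cases i <;> fin_cases j <;> simp [ha, hd]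
  field_simp
  ring

theorem eq_upperTriangular_of_apply_one_zero {R : Type*} [Zero R] {M : Matrix (Fin 2) (Fin 2) R}
    (h : M 1 0 = 0) : M = !![M 0 0, M 0 1; 0, M 1 1] := by
  rw [← h]; exact eta_fin_two M

end Matrix

open Matrix

theorem opNorm2_upperTriangular_le (x c y : ℂ) : opNorm2 !![x, c; 0, y] ≤ ‖x‖ + ‖c‖ + ‖y‖ :=
  (norm_toEuclideanCLM_le_sum _).trans_eq <| by simp [Fin.sum_univ_two, add_assoc]

theorem opNorm2_upperTriangular_mul_inv_le (x c y : ℂ) {a d : ℂ} (ha : a ≠ 0) (hd : d ≠ 0) :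
    opNorm2 (!![x, c; 0, y] * (!![a, 1; 0, d])⁻¹) ≤
      ‖x‖ / ‖a‖ + (‖x‖ / (‖a‖ * ‖d‖) + ‖c‖ / ‖d‖) + ‖y‖ / ‖d‖ := by
  rw [inv_upperTriangular_fin_two ha hd, mul_fin_two]
  simp only [mul_zero, zero_mul, add_zero, zero_add]
  refine (opNorm2_upperTriangular_le _ _ _).trans ?_
  calc _ ≤ ‖x * a⁻¹‖ + (‖x * (-1 / (a * d))‖ + ‖c * d⁻¹‖) + ‖y * d⁻¹‖ := by
        gcongr; exact norm_add_le _ _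
    _ = _ := by simp only [norm_mul, norm_div, norm_inv, norm_neg, norm_one]; ring

theorem Complex.norm_exp_ofReal_mul_I_sub_exp_ofReal_mul_I (θ φ : ℝ) :
    ‖cexp (θ * I) - cexp (φ * I)‖ = 2 * |Real.sin ((θ - φ) / 2)| := by
  have h : cexp (θ * I) - cexp (φ * I) = cexp (φ * I) * (cexp (I * ↑(θ - φ)) - 1) := by
    rw [mul_sub, ← Complex.exp_add]; push_cast; ring_nf
  rw [h, norm_mul, norm_exp_ofReal_mul_I, one_mul, norm_exp_I_mul_ofReal_sub_one, norm_mul,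
    Real.norm_two, Real.norm_eq_abs]

section ImaginaryBlock

variable {α β : ℝ}

theorem exp_smul_imaginaryBlock (h : α ≠ β) (t : ℝ) :
    exp ((t : ℂ) • !![(α : ℂ) * I, 1; 0, (β : ℂ) * I]) =
      !![cexp (↑(t * α) * I), (↑(β - α) * I)⁻¹ * (cexp (↑(t * β) * I) - cexp (↑(t * α) * I));
        0, cexp (↑(t * β) * I)] := by
  have hne : (↑(β - α) * I : ℂ) ≠ 0 := by simp [sub_eq_zero, h.symm]
  have hsmul : (t : ℂ) • !![(α : ℂ) * I, 1; 0, (β : ℂ) * I] =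
      !![↑(t * α) * I, (↑(β - α) * I)⁻¹ * (↑(t * β) * I - ↑(t * α) * I); 0, ↑(t * β) * I] := by
    have hoff : (↑(β - α) * I)⁻¹ * (↑(t * β) * I - ↑(t * α) * I) = (t : ℂ) := by
      rw [inv_mul_eq_iff_eq_mul₀ hne]; push_cast; ring
    rw [hoff]
    ext i j
    fin_cases i <;> fin_cases j <;> simp [mul_assoc]
  rw [hsmul, exp_upperTriangular_fin_two, ← Complex.exp_eq_exp_ℂ]

theorem exp_smul_imaginaryBlock_one_zero (h : α ≠ β) (t : ℝ) :
    exp ((t : ℂ) • !![(α : ℂ) * I, 1; 0, (β : ℂ) * I]) 1 0 = 0 := by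
  rw [exp_smul_imaginaryBlock h]; rfl

theorem norm_exp_smul_imaginaryBlock_zero_zero (h : α ≠ β) (t : ℝ) :
    ‖exp ((t : ℂ) • !![(α : ℂ) * I, 1; 0, (β : ℂ) * I]) 0 0‖ = 1 := by
  rw [exp_smul_imaginaryBlock h]; exact norm_exp_ofReal_mul_I _

theorem norm_exp_smul_imaginaryBlock_one_one (h : α ≠ β) (t : ℝ) :
    ‖exp ((t : ℂ) • !![(α : ℂ) * I, 1; 0, (β : ℂ) * I]) 1 1‖ = 1 := by
  rw [exp_smul_imaginaryBlock h]; exact norm_exp_ofReal_mul_I _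

theorem norm_exp_smul_imaginaryBlock_zero_one (h : α ≠ β) (t : ℝ) :
    ‖exp ((t : ℂ) • !![(α : ℂ) * I, 1; 0, (β : ℂ) * I]) 0 1‖ =
      2 * |Real.sin ((β - α) * t / 2)| / |β - α| := by
  rw [exp_smul_imaginaryBlock h, of_apply, cons_val', cons_val_zero, cons_val_one, cons_val_zero,
    norm_mul, norm_exp_ofReal_mul_I_sub_exp_ofReal_mul_I, norm_inv, norm_mul, norm_I, mul_one,
    norm_real, Real.norm_eq_abs]
  field_simp

theorem norm_exp_smul_imaginaryBlock_zero_one_le_abs (h : α ≠ β) (t : ℝ) :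
    ‖exp ((t : ℂ) • !![(α : ℂ) * I, 1; 0, (β : ℂ) * I]) 0 1‖ ≤ |t| := by
  have hsin := Real.abs_sin_le_abs (x := (β - α) * t / 2)
  rw [abs_div, abs_mul, abs_two] at hsin
  rw [norm_exp_smul_imaginaryBlock_zero_one h, div_le_iff₀ (abs_pos.2 (sub_ne_zero.2 h.symm))]
  linarith

theorem norm_exp_smul_imaginaryBlock_zero_one_le_two_div (h : α ≠ β) (t : ℝ) :
    ‖exp ((t : ℂ) • !![(α : ℂ) * I, 1; 0, (β : ℂ) * I]) 0 1‖ ≤ 2 / |β - α| := by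
  rw [norm_exp_smul_imaginaryBlock_zero_one h]
  gcongr
  exact (mul_le_iff_le_one_right two_pos).2 (Real.abs_sin_le_one _)

theorem opNorm2_exp_smul_imaginaryBlock_le (h : α ≠ β) (t : ℝ) :
    opNorm2 (exp ((t : ℂ) • !![(α : ℂ) * I, 1; 0, (β : ℂ) * I])) ≤ 2 + |t| := by
  rw [eq_upperTriangular_of_apply_one_zero (exp_smul_imaginaryBlock_one_zero h t)]
  refine (opNorm2_upperTriangular_le _ _ _).trans ?_
  rw [norm_exp_smul_imaginaryBlock_zero_zero h, norm_exp_smul_imaginaryBlock_one_one h]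
  linarith [norm_exp_smul_imaginaryBlock_zero_one_le_abs h t]

theorem opNorm2_exp_smul_imaginaryBlock_mul_inv_le (h : α ≠ β) (hα : α ≠ 0) (hβ : β ≠ 0)
    (t : ℝ) :
    opNorm2 (exp ((t : ℂ) • !![(α : ℂ) * I, 1; 0, (β : ℂ) * I]) *
        (!![(α : ℂ) * I, 1; 0, (β : ℂ) * I])⁻¹) ≤
      1 / |α| + (1 / (|α| * |β|) + 2 / |β - α| / |β|) + 1 / |β| := by
  rw [eq_upperTriangular_of_apply_one_zero (exp_smul_imaginaryBlock_one_zero h t)]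
  refine (opNorm2_upperTriangular_mul_inv_le _ _ _ (by simpa using hα) (by simpa using hβ)).trans
    ?_
  simp only [norm_exp_smul_imaginaryBlock_zero_zero h, norm_exp_smul_imaginaryBlock_one_one h,
    norm_mul, norm_I, mul_one, norm_real, Real.norm_eq_abs]
  gcongr
  exact norm_exp_smul_imaginaryBlock_zero_one_le_two_div h t

end ImaginaryBlock

theorem two_div_pi_mul_le_mul_abs_sin_div {r t : ℝ} (ht : 0 ≤ t) (htr : t ≤ r) (hr : 0 < r) :
    2 / π * t ≤ r * |Real.sin (t / r)| := by
  have hx : t / r ≤ π / 2 := ((div_le_one hr).2 htr).trans (by linarith [Real.two_le_pi])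
  calc 2 / π * t = r * (2 / π * (t / r)) := by field_simp
    _ ≤ r * |Real.sin (t / r)| := by
        gcongr
        exact (Real.mul_le_sin (by positivity) hx).trans (le_abs_self _)

theorem add_inv_ne_sub_inv {x : ℝ} (hx : x ≠ 0) : x + x⁻¹ ≠ x - x⁻¹ := by
  intro h
  exact hx (inv_eq_zero.1 (by linarith))

section Batty

variable {n : ℕ}

theorem battyA_eq :
    battyA n = !![((n + (n : ℝ)⁻¹ : ℝ) : ℂ) * I, 1; 0, ((n - (n : ℝ)⁻¹ : ℝ) : ℂ) * I] := by
  ext i j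
  fin_cases i <;> fin_cases j <;> simp [battyA] <;> ring

theorem opNorm2_exp_smul_battyA_le (hn : n ≠ 0) (t : ℝ) :
    opNorm2 (exp ((t : ℂ) • battyA n)) ≤ 2 + |t| := by
  rw [battyA_eq]
  exact opNorm2_exp_smul_imaginaryBlock_le (add_inv_ne_sub_inv (Nat.cast_ne_zero.2 hn)) t

theorem mul_abs_sin_le_opNorm2_exp_smul_battyA (hn : n ≠ 0) (t : ℝ) :
    n * |Real.sin (t / n)| ≤ opNorm2 (exp ((t : ℂ) • battyA n)) := by
  have hn' : (0 : ℝ) < n := by positivity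
  have hβα : (n - (n : ℝ)⁻¹) - (n + (n : ℝ)⁻¹) = -(2 / n) := by ring
  refine le_of_eq_of_le ?_ (norm_apply_le_norm_toEuclideanCLM _ 0 1)
  rw [battyA_eq, norm_exp_smul_imaginaryBlock_zero_one (add_inv_ne_sub_inv hn'.ne'), hβα,
    abs_neg, abs_of_pos (div_pos two_pos hn'), show -(2 / (n : ℝ)) * t / 2 = -(t / n) by ring,
    Real.sin_neg, abs_neg]
  field_simp

theorem opNorm2_exp_smul_battyA_mul_inv_le (hn : 2 ≤ n) (t : ℝ) :
    opNorm2 (exp ((t : ℂ) • battyA n) * (battyA n)⁻¹) ≤ 3 := by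
  have hm : (2 : ℝ) ≤ n := by exact_mod_cast hn
  rw [battyA_eq]
  set m : ℝ := (n : ℝ)
  have hinv : m⁻¹ ≤ 1 / 2 := by rw [inv_le_comm₀] <;> linarith
  have hα : 2 ≤ m + m⁻¹ := by linarith [inv_pos.2 (by linarith : 0 < m)]
  have hβ : 3 / 4 * m ≤ m - m⁻¹ := by linarith
  refine (opNorm2_exp_smul_imaginaryBlock_mul_inv_le (add_inv_ne_sub_inv (by linarith))
    (by linarith) (by linarith) t).trans ?_
  have hβα : 2 / |m - m⁻¹ - (m + m⁻¹)| = m := by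
    rw [show m - m⁻¹ - (m + m⁻¹) = -(2 * m⁻¹) by ring, abs_neg, abs_of_pos (by positivity)]
    field_simp
  rw [hβα, abs_of_pos (by linarith), abs_of_pos (by linarith)]
  have h1 : 1 / (m + m⁻¹) ≤ 1 / 2 := one_div_le_one_div_of_le two_pos hα
  have h2 : 1 / ((m + m⁻¹) * (m - m⁻¹)) ≤ 1 / 3 :=
    one_div_le_one_div_of_le three_pos (by nlinarith)
  have h3 : m / (m - m⁻¹) ≤ 4 / 3 := by rw [div_le_iff₀ (by linarith)]; linarith
  have h4 : 1 / (m - m⁻¹) ≤ 2 / 3 := by rw [div_le_iff₀ (by linarith)]; linarith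
  linarith

end Batty

/-- For the block-diagonal semigroup built from `T_n(t) = e^{tA_n}`,
`‖T(t)A⁻¹‖ / ‖T(t)‖ ≤ C'/t` eventually; formally
`(sup_{n≥2} ‖T_n(t)A_n⁻¹‖) / (sup_{n≥2} ‖T_n(t)‖) ≤ C'/t` for `t ≥ t₀`. -/
theorem sup_ratio_le_inv_t :
    ∃ C' t₀ : ℝ, 0 < C' ∧ 0 < t₀ ∧ ∀ t : ℝ, t₀ ≤ t →
      (⨆ n : {k : ℕ // 2 ≤ k},
          opNorm2 (NormedSpace.exp ((t : ℂ) • battyA n) * (battyA n)⁻¹)) /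
        (⨆ n : {k : ℕ // 2 ≤ k}, opNorm2 (NormedSpace.exp ((t : ℂ) • battyA n))) ≤
        C' / t := by
  refine ⟨3 * π / 2, 1, by positivity, one_pos, fun t ht => ?_⟩
  have ht0 : 0 < t := one_pos.trans_le ht
  have : Nonempty {k : ℕ // 2 ≤ k} := ⟨⟨2, le_rfl⟩⟩
  have hnum : (⨆ n : {k : ℕ // 2 ≤ k}, opNorm2 (exp ((t : ℂ) • battyA n) * (battyA n)⁻¹)) ≤ 3 :=
    ciSup_le fun n => opNorm2_exp_smul_battyA_mul_inv_le n.2 t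
  have hbdd :
      BddAbove (Set.range fun n : {k : ℕ // 2 ≤ k} => opNorm2 (exp ((t : ℂ) • battyA n))) :=
    ⟨2 + |t|, Set.forall_mem_range.2 fun n => opNorm2_exp_smul_battyA_le (by omega) t⟩
  have hN : 2 ≤ ⌈t⌉₊ + 1 := by have := Nat.ceil_pos.2 ht0; omega
  have hden : 2 / π * t ≤ ⨆ n : {k : ℕ // 2 ≤ k}, opNorm2 (exp ((t : ℂ) • battyA n)) :=
    calc 2 / π * t ≤ ((⌈t⌉₊ + 1 : ℕ) : ℝ) * |Real.sin (t / (⌈t⌉₊ + 1 : ℕ))| :=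
          two_div_pi_mul_le_mul_abs_sin_div ht0.le (by push_cast; linarith [Nat.le_ceil t])
            (by positivity)
      _ ≤ opNorm2 (exp ((t : ℂ) • battyA (⌈t⌉₊ + 1))) :=
          mul_abs_sin_le_opNorm2_exp_smul_battyA (by omega) t
      _ ≤ _ := le_ciSup hbdd ⟨_, hN⟩
  calc _ ≤ 3 / (2 / π * t) := div_le_div₀ (by norm_num) hnum (by positivity) hden
    _ = 3 * π / 2 / t := by field_simp
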